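/- arXiv:2006.06635 — 2 statements merged into one kernel-verified Lean document; each statement's English description precedes it below -/
import Mathlib

section
/- Let Γ ∈ ℝ^{k×k} and define the linear operator H on k×k matrices by (H M)_{ab} = Γ_{ab} M_{ab} + M_{ba}. If Γ_{ab} Γ_{ba} ≠ 1 for all a, b, then H is invertible, and its inverse is given by (H⁻¹ M)_{ab} = (Γ_{ba} M_{ab} - M_{ba}) / (Γ_{ab} Γ_{ba} - 1). -/
/-!
Entrywise, `H` only couples the pair `(M a b, M b a)`, through the `2 × 2` system with matrix
`!![Γ a b, 1; 1, Γ b a]`, whose determinant `Γ a b * Γ b a - 1` is nonzero. The proposed `Hinv`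
is Cramer's rule for that system, so it inverts `H` on both sides.
-/

section PairSystem

variable {K : Type*} [Field K] {g g' : K}

lemma cramer_solve_left (hg : g * g' ≠ 1) (x y : K) :
    (g' * (g * x + y) - (g' * y + x)) / (g * g' - 1) = x := by
  rw [div_eq_iff (sub_ne_zero_of_ne hg)]
  ring

lemma cramer_solve_right (hg : g * g' ≠ 1) (x y : K) :
    g * ((g' * x - y) / (g * g' - 1)) + (g * y - x) / (g' * g - 1) = x := by
  rw [mul_comm g' g, mul_div_assoc', ← add_div, div_eq_iff (sub_ne_zero_of_ne hg)]
  ring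

end PairSystem

section TransposeScale

variable {K n : Type*} [Field K] {Γ : Matrix n n K} {H Hinv : Matrix n n K → Matrix n n K}

lemma leftInverse_of_entrywise_cramer (hΓ : ∀ a b, Γ a b * Γ b a ≠ 1)
    (hH : ∀ M a b, H M a b = Γ a b * M a b + M b a)
    (hHinv : ∀ M a b, Hinv M a b = (Γ b a * M a b - M b a) / (Γ a b * Γ b a - 1)) :
    Function.LeftInverse Hinv H := fun M => by
  ext a b
  rw [hHinv, hH, hH, cramer_solve_left (hΓ a b)]

lemma rightInverse_of_entrywise_cramer (hΓ : ∀ a b, Γ a b * Γ b a ≠ 1)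
    (hH : ∀ M a b, H M a b = Γ a b * M a b + M b a)
    (hHinv : ∀ M a b, Hinv M a b = (Γ b a * M a b - M b a) / (Γ a b * Γ b a - 1)) :
    Function.RightInverse Hinv H := fun M => by
  ext a b
  rw [hH, hHinv, hHinv, cramer_solve_right (hΓ a b)]

end TransposeScale

/-- For Γ ∈ ℝ^{k×k}, the operator (H M)_{ab} = Γ_{ab} M_{ab} + M_{ba} is invertible
when Γ_{ab}Γ_{ba} ≠ 1 for all a, b, with inverse
(H⁻¹ M)_{ab} = (Γ_{ba} M_{ab} - M_{ba}) / (Γ_{ab} Γ_{ba} - 1). -/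
theorem stmt_2 (k : ℕ) (Γ : Matrix (Fin k) (Fin k) ℝ)
    (hΓ : ∀ a b, Γ a b * Γ b a ≠ 1)
    (H Hinv : Matrix (Fin k) (Fin k) ℝ → Matrix (Fin k) (Fin k) ℝ)
    (hH : ∀ M a b, H M a b = Γ a b * M a b + M b a)
    (hHinv : ∀ M a b, Hinv M a b = (Γ b a * M a b - M b a) / (Γ a b * Γ b a - 1)) :
    Function.Bijective H ∧ Function.LeftInverse Hinv H ∧ Function.RightInverse Hinv H := by
  have hleft := leftInverse_of_entrywise_cramer hΓ hH hHinv
  have hright := rightInverse_of_entrywise_cramer hΓ hH hHinv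
  exact ⟨⟨hleft.injective, hright.surjective⟩, hleft, hright⟩
end

section
/- Suppose s and s' are ℝᵏ-valued random vectors, n¹,…,nᵐ and n'¹,…,n'ᵐ are Gaussian random vectors with all of s', n'¹,…,n'ᵐ, n¹,…,nᵐ mutually independent as appropriate, and that for each i there are scale-permutation matrices Pⁱ with s + nⁱ = Pⁱ(s' + n'ⁱ) almost surely. If the components of s' are non-Gaussian, then all the Pⁱ are equal: P¹ = P² = ⋯ = Pᵐ. -/
open Matrix MeasureTheory ProbabilityTheory

/-- A real random variable is Gaussian (possibly degenerate). -/
def IsGaussianRV {Ω : Type*} [MeasureSpace Ω] (X : Ω → ℝ) : Prop :=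
  ∃ (μ : ℝ) (v : NNReal), Measure.map X ℙ = gaussianReal μ v

/-- A random vector is Gaussian if every linear functional of it is Gaussian. -/
def IsGaussianVec {Ω : Type*} [MeasureSpace Ω] {k : ℕ} (X : Ω → Fin k → ℝ) : Prop :=
  ∀ c : Fin k → ℝ, IsGaussianRV (fun ω => ∑ j, c j * X ω j)

/-- A scale-permutation matrix: product of an invertible diagonal matrix and a
permutation matrix. -/
def IsScalePerm {k : ℕ} (P : Matrix (Fin k) (Fin k) ℝ) : Prop :=
  ∃ (σ : Equiv.Perm (Fin k)) (d : Fin k → ℝ), (∀ j, d j ≠ 0) ∧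
    ∀ a b, P a b = if a = σ b then d b else 0


/-!
Subtracting the equations for indices `i` and `j` row by row expresses
`dⁱ s'_{σᵢ⁻¹a} - dʲ s'_{σⱼ⁻¹a}`, a function of `s'`, as a function of the noises. Since `s'` is
independent of the noises, this random variable is independent of itself, hence a.s. constant.
A non-Gaussian component is in particular not a.s. constant, so independence of the components
of `s'` forces `σᵢ⁻¹a = σⱼ⁻¹a` and then equal scales.
-/

namespace ProbabilityTheory

variable {Ω : Type*} [MeasurableSpace Ω] {μ : Measure Ω}

theorem iIndepFun.indepFun_none_some {ι β : Type*} [Fintype ι] [MeasurableSpace β]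
    {f : Option ι → Ω → β} (h : iIndepFun f μ) (hf : ∀ i, Measurable (f i)) :
    IndepFun (f none) (fun ω i => f (some i) ω) μ := by
  classical
  have hsplit := h.indepFun_finset {none} {none}ᶜ disjoint_compl_right hf
  exact hsplit.comp (φ := fun (v : ({none} : Finset (Option ι)) → β) => v ⟨none, by simp⟩)
    (ψ := fun (v : ({none}ᶜ : Finset (Option ι)) → β) i => v ⟨some i, by simp⟩)
    (by fun_prop) (by fun_prop)

variable [IsProbabilityMeasure μ]

theorem IndepFun.exists_ae_eq_const_of_self {β : Type*} [MeasurableSpace β]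
    [MeasurableSpace.CountablySeparated β] [Nonempty β] {X : Ω → β} (hX : Measurable X)
    (h : IndepFun X X μ) : ∃ c, X =ᵐ[μ] fun _ => c := by
  refine Filter.exists_eventuallyEq_const_of_forall_separating MeasurableSet fun U hU => ?_
  have hpre : MeasurableSet (X ⁻¹' U) := hX hU
  have hself : IndepSet (X ⁻¹' U) (X ⁻¹' U) μ :=
    (indepSet_iff_measure_inter_eq_mul hpre hpre μ).mpr (h.meas_inter ⟨U, hU, rfl⟩ ⟨U, hU, rfl⟩)
  rcases measure_eq_zero_or_one_of_indepSet_self hself with h0 | h1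
  · exact Or.inr (measure_eq_zero_iff_ae_notMem.mp h0)
  · exact Or.inl (ae_iff.mpr ((prob_compl_eq_zero_iff hpre).mpr h1))

theorem IndepFun.exists_ae_eq_const_of_ae_eq {β : Type*} [MeasurableSpace β]
    [MeasurableSpace.CountablySeparated β] [Nonempty β] {X Y : Ω → β} (hX : Measurable X)
    (h : IndepFun X Y μ) (hXY : X =ᵐ[μ] Y) : ∃ c, X =ᵐ[μ] fun _ => c :=
  (h.congr .rfl hXY.symm).exists_ae_eq_const_of_self hX

theorem iIndepFun.eq_and_eq_of_ae_eq_const_sub {ι : Type*} {X : ι → Ω → ℝ}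
    (hX : ∀ j, Measurable (X j)) (h : iIndepFun X μ)
    (hX_nonconst : ∀ j c, ¬ X j =ᵐ[μ] fun _ => c) {b₁ b₂ : ι} {d₁ d₂ c : ℝ} (hd₁ : d₁ ≠ 0)
    (hc : (fun ω => d₁ * X b₁ ω - d₂ * X b₂ ω) =ᵐ[μ] fun _ => c) : b₁ = b₂ ∧ d₁ = d₂ := by
  by_cases hb : b₁ = b₂
  · subst hb
    refine ⟨rfl, by_contra fun hd => hX_nonconst b₁ (c / (d₁ - d₂)) ?_⟩
    filter_upwards [hc] with ω hω
    rw [eq_div_iff (sub_ne_zero.mpr hd)]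
    linarith
  · -- `X b₁` is a.s. a function of the independent `X b₂`, hence independent of itself
    have hsolve : (fun ω => (c + d₂ * X b₂ ω) / d₁) =ᵐ[μ] X b₁ := by
      filter_upwards [hc] with ω hω
      rw [div_eq_iff hd₁]
      linarith
    have hindep : IndepFun (X b₁) (fun ω => (c + d₂ * X b₂ ω) / d₁) μ :=
      (h.indepFun hb).comp measurable_id (by fun_prop : Measurable fun y => (c + d₂ * y) / d₁)
    obtain ⟨c', hc'⟩ := hindep.exists_ae_eq_const_of_ae_eq (hX b₁) hsolve.symm
    exact absurd hc' (hX_nonconst b₁ c')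

end ProbabilityTheory

theorem isGaussianRV_of_ae_eq_const {Ω : Type*} [MeasureSpace Ω]
    [IsProbabilityMeasure (ℙ : Measure Ω)] {X : Ω → ℝ} {c : ℝ} (h : X =ᵐ[ℙ] fun _ => c) :
    IsGaussianRV X :=
  ⟨c, 0, by rw [Measure.map_congr h, gaussianReal_zero_var, Measure.map_const, measure_univ,
    one_smul]⟩

theorem mulVec_apply_of_isScalePerm {k : ℕ} {P : Matrix (Fin k) (Fin k) ℝ}
    {σ : Equiv.Perm (Fin k)} {d : Fin k → ℝ} (hP : ∀ a b, P a b = if a = σ b then d b else 0)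
    (v : Fin k → ℝ) (a : Fin k) : (P *ᵥ v) a = d (σ.symm a) * v (σ.symm a) := by
  rw [mulVec, dotProduct, Finset.sum_eq_single (σ.symm a)]
  · simp [hP]
  · intro b _ hb
    have hab : a ≠ σ b := fun hab => hb (by simp [hab])
    simp [hP, hab]
  · simp

theorem eq_of_isScalePerm_of_symm_apply_eq {k : ℕ} {P Q : Matrix (Fin k) (Fin k) ℝ}
    {σ τ : Equiv.Perm (Fin k)} {d e : Fin k → ℝ}
    (hP : ∀ a b, P a b = if a = σ b then d b else 0)
    (hQ : ∀ a b, Q a b = if a = τ b then e b else 0)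
    (h : ∀ a, σ.symm a = τ.symm a ∧ d (σ.symm a) = e (τ.symm a)) : P = Q := by
  have hστ : σ = τ := Equiv.symm_bijective.injective (Equiv.ext fun a => (h a).1)
  subst hστ
  have hde : d = e := funext fun b => by simpa using (h (σ b)).2
  ext a b
  rw [hP, hQ, hde]

theorem stmt_7_general {Ω : Type*} [MeasureSpace Ω] [IsProbabilityMeasure (ℙ : Measure Ω)]
    (k m : ℕ) (s s' : Ω → Fin k → ℝ) (n n' : Fin m → Ω → Fin k → ℝ)
    (hs'_meas : Measurable s') (hn_meas : ∀ i, Measurable (n i))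
    (hn'_meas : ∀ i, Measurable (n' i))
    (hs'_comp_indep : iIndepFun (fun j ω => s' ω j) ℙ)
    (hs'_nongauss : ∀ j : Fin k, ¬ IsGaussianRV (fun ω => s' ω j))
    (hfam_indep : iIndepFun
      (fun j : Option (Fin m ⊕ Fin m) => Option.elim j s' (Sum.elim n n')) ℙ)
    (P : Fin m → Matrix (Fin k) (Fin k) ℝ) (hP : ∀ i, IsScalePerm (P i))
    (heq : ∀ i, ∀ᵐ ω ∂ℙ, s ω + n i ω = (P i).mulVec (s' ω + n' i ω)) :
    ∀ i j, P i = P j := by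
  intro i j
  obtain ⟨σi, di, hdi, hPi⟩ := hP i
  obtain ⟨σj, dj, -, hPj⟩ := hP j
  have hnoise_indep : IndepFun s' (fun ω x => Sum.elim n n' x ω) ℙ :=
    hfam_indep.indepFun_none_some fun
      | none => hs'_meas
      | some (.inl i) => hn_meas i
      | some (.inr i) => hn'_meas i
  refine eq_of_isScalePerm_of_symm_apply_eq hPi hPj fun a => ?_
  set bi := σi.symm a
  set bj := σj.symm a
  have hrow : (fun ω => di bi * s' ω bi - dj bj * s' ω bj) =ᵐ[ℙ]
      fun ω => n i ω a - n j ω a - di bi * n' i ω bi + dj bj * n' j ω bj := by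
    filter_upwards [heq i, heq j] with ω hωi hωj
    have hai := congrFun hωi a
    have haj := congrFun hωj a
    simp only [Pi.add_apply, mulVec_apply_of_isScalePerm hPi, mulVec_apply_of_isScalePerm hPj]
      at hai haj
    linarith
  have hrow_indep : IndepFun (fun ω => di bi * s' ω bi - dj bj * s' ω bj)
      (fun ω => n i ω a - n j ω a - di bi * n' i ω bi + dj bj * n' j ω bj) ℙ :=
    hnoise_indep.comp (φ := fun (v : Fin k → ℝ) => di bi * v bi - dj bj * v bj)
      (ψ := fun (N : Fin m ⊕ Fin m → Fin k → ℝ) =>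
        N (.inl i) a - N (.inl j) a - di bi * N (.inr i) bi + dj bj * N (.inr j) bj)
      (by fun_prop) (by fun_prop)
  obtain ⟨c, hc⟩ := hrow_indep.exists_ae_eq_const_of_ae_eq (by fun_prop) hrow
  exact hs'_comp_indep.eq_and_eq_of_ae_eq_const_sub (fun b => hs'_meas.eval)
    (fun b c hb => hs'_nongauss b (isGaussianRV_of_ae_eq_const hb)) (hdi bi) hc

/-- If s + nⁱ = Pⁱ(s' + n'ⁱ) a.s. with scale-permutation matrices Pⁱ, Gaussian noises,
and s' with independent non-Gaussian components, then all the Pⁱ are equal. -/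
theorem stmt_7 {Ω : Type*} [MeasureSpace Ω] [IsProbabilityMeasure (ℙ : Measure Ω)]
    (k m : ℕ) (s s' : Ω → Fin k → ℝ) (n n' : Fin m → Ω → Fin k → ℝ)
    (hs'_meas : Measurable s') (hn_meas : ∀ i, Measurable (n i))
    (hn'_meas : ∀ i, Measurable (n' i))
    (hs'_comp_indep : iIndepFun (fun j ω => s' ω j) ℙ)
    (hs'_nongauss : ∀ j : Fin k, ¬ IsGaussianRV (fun ω => s' ω j))
    (hn_gauss : ∀ i, IsGaussianVec (n i)) (hn'_gauss : ∀ i, IsGaussianVec (n' i))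
    (hfam_indep : iIndepFun
      (fun j : Option (Fin m ⊕ Fin m) => Option.elim j s' (Sum.elim n n')) ℙ)
    (P : Fin m → Matrix (Fin k) (Fin k) ℝ) (hP : ∀ i, IsScalePerm (P i))
    (heq : ∀ i, ∀ᵐ ω ∂ℙ, s ω + n i ω = (P i).mulVec (s' ω + n' i ω)) :
    ∀ i j, P i = P j :=
  stmt_7_general k m s s' n n' hs'_meas hn_meas hn'_meas hs'_comp_indep hs'_nongauss hfam_indep P hP
    heq
end
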